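/- Second-order tail expansion of the GLMGA distribution: for all σ, a, b > 0, letting F̄(y) = ∫_y^∞ f_{σ,a,b}(t) dt and C = 2 / ( (2b)^{1/2} · B(a, 1/2) ), one has lim_{y→∞} y^{1/σ} · ( F̄(y) / (C · y^{-1/(2σ)}) − 1 ) = −(2a + 1)/(12b). -/

import Mathlib

open MeasureTheory Real Filter Topology

/-- The (real) beta function `B(m,n) = ∫_0^1 t^(m-1) (1-t)^(n-1) dt`. -/
noncomputable def betaFn (m n : ℝ) : ℝ :=
  ∫ t in (0:ℝ)..1, t ^ (m - 1) * (1 - t) ^ (n - 1)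

/-- The regularized incomplete beta function `I_{m,n}(v)`. -/
noncomputable def regIncBeta (m n v : ℝ) : ℝ :=
  (∫ t in (0:ℝ)..v, t ^ (m - 1) * (1 - t) ^ (n - 1)) / betaFn m n

/-- The GLMGA density `f_{σ,a,b}`. -/
noncomputable def glmga (σ a b y : ℝ) : ℝ :=
  (2 * b) ^ a / (σ * betaFn a (1 / 2)) * y ^ (-(1 / (2 * σ) + 1))
    / (y ^ (-1 / σ) + 2 * b) ^ (a + 1 / 2)

/-!
Write `s = 1/(2σ)` and `p = a + 1/2`. For `y > 0` the density is
`f(y) = K y^(-s-1) (y^(-2s) + 2b)^(-p)` with `K = (2b)^a / (σ B(a, 1/2))`, and `K (2b)^(-p) = C s`,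
so `f(y) = C s y^(-s-1) (1 - p y^(-2s) / (2b) + o(y^(-2s)))`.
The tail `F̄` has derivative `-f`, so L'Hôpital's rule applied to `(F̄(y) - C y^(-s)) / (C y^(-3s))`
turns this expansion of the density into the expansion of the tail, with second-order coefficient
`-p / (6b)`.
-/

open Set

theorem intervalIntegrable_rpow_mul_one_sub_rpow {m n : ℝ} (hm : 0 < m) (hn : 0 < n) :
    IntervalIntegrable (fun t : ℝ => t ^ (m - 1) * (1 - t) ^ (n - 1)) volume 0 1 := by
  refine (Complex.betaIntegral_convergent (u := m) (v := n) (by simpa) (by simpa)).norm.congr_uIoo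
    fun t ht => ?_
  rw [uIoo_of_le zero_le_one] at ht
  have h1t : (1 - (t : ℂ)) = ((1 - t : ℝ) : ℂ) := by push_cast; ring
  simp only [norm_mul, h1t, Complex.norm_cpow_eq_rpow_re_of_pos ht.1,
    Complex.norm_cpow_eq_rpow_re_of_pos (sub_pos.2 ht.2)]
  simp

theorem betaFn_pos {m n : ℝ} (hm : 0 < m) (hn : 0 < n) : 0 < betaFn m n :=
  intervalIntegral.intervalIntegral_pos_of_pos_on (intervalIntegrable_rpow_mul_one_sub_rpow hm hn)
    (fun _ ht => mul_pos (rpow_pos_of_pos ht.1 _) (rpow_pos_of_pos (sub_pos.2 ht.2) _)) one_pos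

theorem hasDerivAt_integral_Ioi {E : Type*} [NormedAddCommGroup E] [NormedSpace ℝ E]
    [CompleteSpace E] {f : ℝ → E} {c y : ℝ} (hf : IntegrableOn f (Ioi c)) (hy : c < y)
    (hfy : ContinuousAt f y) :
    HasDerivAt (fun z => ∫ t in Ioi z, f t) (-f y) y := by
  have hderiv : HasDerivAt (fun z => ∫ t in c..z, f t) (f y) y :=
    intervalIntegral.integral_hasDerivAt_right
      ((intervalIntegrable_iff_integrableOn_Ioc_of_le hy.le).2 (hf.mono_set Ioc_subset_Ioi_self))
      (AEStronglyMeasurable.stronglyMeasurableAtFilter_of_mem hf.aestronglyMeasurable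
        (Ioi_mem_nhds hy)) hfy
  refine (hderiv.const_sub (∫ t in Ioi c, f t)).congr_of_eventuallyEq ?_
  filter_upwards [Ioi_mem_nhds hy] with z hz
  exact (eq_sub_of_add_eq' (intervalIntegral.integral_interval_add_Ioi hf
    (hf.mono_set (Ioi_subset_Ioi hz.le))))

theorem tendsto_rpow_mul_div_rpow_sub_one_of_hasDerivAt {F f : ℝ → ℝ} {C s r L : ℝ}
    (hC : C ≠ 0) (hs : 0 < s) (hr : 0 < r) (hF : Tendsto F atTop (𝓝 0))
    (hF' : ∀ᶠ y in atTop, HasDerivAt F (-f y) y)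
    (hf : Tendsto (fun y => y ^ (s + r + 1) * (f y - C * s * y ^ (-s - 1)) / (C * (s + r)))
      atTop (𝓝 L)) :
    Tendsto (fun y => y ^ r * (F y / (C * y ^ (-s)) - 1)) atTop (𝓝 L) := by
  have hsr : 0 < s + r := add_pos hs hr
  have hN : ∀ᶠ y in atTop, HasDerivAt (fun z => F z - C * z ^ (-s))
      (-f y - C * (-s * y ^ (-s - 1))) y := by
    filter_upwards [hF', eventually_gt_atTop 0] with y hFy hy
    exact hFy.sub ((hasDerivAt_rpow_const (Or.inl hy.ne')).const_mul C)
  have hD : ∀ᶠ y in atTop, HasDerivAt (fun z => C * z ^ (-(s + r)))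
      (C * (-(s + r) * y ^ (-(s + r) - 1))) y := by
    filter_upwards [eventually_gt_atTop 0] with y hy
    exact (hasDerivAt_rpow_const (Or.inl hy.ne')).const_mul C
  have hD_ne : ∀ᶠ y in atTop, C * (-(s + r) * y ^ (-(s + r) - 1)) ≠ 0 := by
    filter_upwards [eventually_gt_atTop 0] with y hy
    have := rpow_pos_of_pos hy (-(s + r) - 1)
    exact mul_ne_zero hC (mul_ne_zero (by linarith) this.ne')
  have hN0 : Tendsto (fun y => F y - C * y ^ (-s)) atTop (𝓝 0) := by
    simpa using hF.sub ((tendsto_rpow_neg_atTop hs).const_mul C)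
  have hD0 : Tendsto (fun y => C * y ^ (-(s + r))) atTop (𝓝 0) := by
    simpa using (tendsto_rpow_neg_atTop hsr).const_mul C
  have hquot : Tendsto (fun y => (-f y - C * (-s * y ^ (-s - 1))) /
      (C * (-(s + r) * y ^ (-(s + r) - 1)))) atTop (𝓝 L) := by
    refine hf.congr' ?_
    filter_upwards [eventually_gt_atTop 0] with y hy
    have hpos := rpow_pos_of_pos hy (s + r + 1)
    rw [show -(s + r) - 1 = -(s + r + 1) by ring, rpow_neg hy.le]
    field_simp
    ring
  refine (HasDerivAt.lhopital_zero_atTop hN hD hD_ne hN0 hD0 hquot).congr' ?_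
  filter_upwards [eventually_gt_atTop 0] with y hy
  have hpos := rpow_pos_of_pos hy s
  have hpos' := rpow_pos_of_pos hy r
  rw [rpow_neg hy.le, neg_add, rpow_add hy, rpow_neg hy.le, rpow_neg hy.le]
  field_simp

theorem tendsto_rpow_mul_rpow_neg_add_sub {c p r : ℝ} (hc : 0 < c) (hr : 0 < r) :
    Tendsto (fun y : ℝ => y ^ r * ((y ^ (-r) + c) ^ p - c ^ p)) atTop (𝓝 (p * c ^ (p - 1))) := by
  have hderiv : HasDerivAt (fun x : ℝ => (x + c) ^ p) (p * c ^ (p - 1)) 0 := by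
    simpa using ((hasDerivAt_id (0 : ℝ)).add_const c).rpow_const (p := p)
      (Or.inl (by simpa using hc.ne'))
  have hx : Tendsto (fun y : ℝ => y ^ (-r)) atTop (𝓝[≠] 0) :=
    tendsto_nhdsWithin_iff.2 ⟨tendsto_rpow_neg_atTop hr,
      (eventually_gt_atTop 0).mono fun y hy => (rpow_pos_of_pos hy _).ne'⟩
  refine ((hasDerivAt_iff_tendsto_slope.1 hderiv).comp hx).congr' ?_
  filter_upwards [eventually_gt_atTop 0] with y hy
  simp [slope_def_field, rpow_neg hy.le, div_eq_inv_mul]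

section GLMGA

variable {σ a b : ℝ}

theorem glmga_eq_mul_rpow_neg (hb : 0 < b) {y : ℝ} (hy : 0 < y) :
    glmga σ a b y = (2 * b) ^ a / (σ * betaFn a (1 / 2)) * y ^ (-(1 / (2 * σ)) - 1)
      * (y ^ (-(1 / σ)) + 2 * b) ^ (-(a + 1 / 2)) := by
  have hden : 0 ≤ y ^ (-(1 / σ)) + 2 * b := by positivity
  rw [glmga, rpow_neg hden, neg_div, neg_add', div_eq_mul_inv]

theorem continuousOn_glmga (hb : 0 < b) : ContinuousOn (glmga σ a b) (Ioi 0) := by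
  have hpow (e : ℝ) : ContinuousOn (fun y : ℝ => y ^ e) (Ioi 0) :=
    continuousOn_id.rpow_const fun y hy => Or.inl (ne_of_gt hy)
  refine ContinuousOn.congr ?_ fun y (hy : 0 < y) => glmga_eq_mul_rpow_neg hb hy
  exact (continuousOn_const.mul (hpow _)).mul (((hpow _).add continuousOn_const).rpow_const
    fun y (hy : 0 < y) => Or.inl (add_pos (rpow_pos_of_pos hy _) (by positivity)).ne')

theorem integrableOn_glmga_Ioi (hσ : 0 < σ) (ha : 0 < a) (hb : 0 < b) {c : ℝ} (hc : 0 < c) :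
    IntegrableOn (glmga σ a b) (Ioi c) := by
  set K := (2 * b) ^ a / (σ * betaFn a (1 / 2))
  have hdom : IntegrableOn (fun t : ℝ => K * (2 * b) ^ (-(a + 1 / 2)) * t ^ (-(1 / (2 * σ)) - 1))
      (Ioi c) :=
    (integrableOn_Ioi_rpow_of_lt (by linarith [one_div_pos.2 (mul_pos two_pos hσ)]) hc).const_mul _
  refine hdom.mono' (((continuousOn_glmga hb).mono (Ioi_subset_Ioi hc.le)).aestronglyMeasurable
    measurableSet_Ioi) ?_
  filter_upwards [ae_restrict_mem measurableSet_Ioi] with t (ht : c < t)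
  have ht0 : 0 < t := hc.trans ht
  have hK : 0 ≤ K := div_nonneg (by positivity) (mul_pos hσ (betaFn_pos ha one_half_pos)).le
  have hfactor : (t ^ (-(1 / σ)) + 2 * b) ^ (-(a + 1 / 2)) ≤ (2 * b) ^ (-(a + 1 / 2)) :=
    rpow_le_rpow_of_nonpos (by positivity) (le_add_of_nonneg_left (by positivity)) (by linarith)
  rw [glmga_eq_mul_rpow_neg hb ht0, norm_of_nonneg (by positivity)]
  calc K * t ^ (-(1 / (2 * σ)) - 1) * (t ^ (-(1 / σ)) + 2 * b) ^ (-(a + 1 / 2))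
      ≤ K * t ^ (-(1 / (2 * σ)) - 1) * (2 * b) ^ (-(a + 1 / 2)) := by gcongr
    _ = K * (2 * b) ^ (-(a + 1 / 2)) * t ^ (-(1 / (2 * σ)) - 1) := by ring

noncomputable def glmgaTailConst (a b : ℝ) : ℝ :=
  2 / ((2 * b) ^ ((1:ℝ) / 2) * betaFn a (1 / 2))

theorem glmgaTailConst_pos (ha : 0 < a) (hb : 0 < b) : 0 < glmgaTailConst a b := by
  have := betaFn_pos ha one_half_pos
  unfold glmgaTailConst
  positivity

theorem glmgaTailConst_mul (ha : 0 < a) (hb : 0 < b) :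
    glmgaTailConst a b * (1 / (2 * σ)) =
      (2 * b) ^ a / (σ * betaFn a (1 / 2)) * (2 * b) ^ (-(a + 1 / 2)) := by
  have := (betaFn_pos ha one_half_pos).ne'
  have h2b : 0 < 2 * b := by positivity
  rw [glmgaTailConst, rpow_neg h2b.le, rpow_add h2b]
  field_simp

theorem tendsto_glmga_sub_leading_term (hσ : 0 < σ) (ha : 0 < a) (hb : 0 < b) :
    Tendsto (fun y => y ^ (1 / (2 * σ) + 1 / σ + 1) *
        (glmga σ a b y - glmgaTailConst a b * (1 / (2 * σ)) * y ^ (-(1 / (2 * σ)) - 1)) /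
        (glmgaTailConst a b * (1 / (2 * σ) + 1 / σ)))
      atTop (𝓝 (-(2 * a + 1) / (12 * b))) := by
  have h2b : 0 < 2 * b := by positivity
  set s := 1 / (2 * σ)
  set p := a + 1 / 2
  set K := (2 * b) ^ a / (σ * betaFn a (1 / 2))
  set C := glmgaTailConst a b
  have hCs : C * s = K * (2 * b) ^ (-p) := glmgaTailConst_mul ha hb
  have hlim := (tendsto_rpow_mul_rpow_neg_add_sub h2b (one_div_pos.2 hσ) (p := -p)).const_mul
    (K / (C * (s + 1 / σ)))
  convert hlim.congr' ?_ using 2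
  · have hC : C ≠ 0 := (glmgaTailConst_pos ha hb).ne'
    have hs : s ≠ 0 := by positivity
    have hs3 : s + 1 / σ = 3 * s := by simp only [s]; field_simp; ring
    have hK : K * (2 * b) ^ (-p - 1) = C * s / (2 * b) := by
      rw [rpow_sub_one h2b.ne', hCs]; ring
    rw [hs3, show K / (C * (3 * s)) * (-p * (2 * b) ^ (-p - 1))
      = -p / (C * (3 * s)) * (K * (2 * b) ^ (-p - 1)) by ring, hK]
    simp only [p]
    field_simp
    ring
  filter_upwards [eventually_gt_atTop 0] with y hy
  have hpow : y ^ (s + 1 / σ + 1) * y ^ (-s - 1) = y ^ (1 / σ) := by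
    rw [← rpow_add hy]; ring_nf
  rw [glmga_eq_mul_rpow_neg hb hy, ← hpow, mul_sub, hCs]
  ring

end GLMGA

/-- second-order tail expansion of the GLMGA distribution. -/
theorem glmga_tail_second_order (σ a b : ℝ) (hσ : 0 < σ) (ha : 0 < a) (hb : 0 < b) :
    Tendsto
      (fun y : ℝ => y ^ (1 / σ) *
        ((∫ t in Set.Ioi y, glmga σ a b t) /
            ((2 / ((2 * b) ^ ((1:ℝ) / 2) * betaFn a (1 / 2))) * y ^ (-(1 / (2 * σ)))) - 1))
      atTop (𝓝 (-(2 * a + 1) / (12 * b))) := by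
  refine tendsto_rpow_mul_div_rpow_sub_one_of_hasDerivAt (glmgaTailConst_pos ha hb).ne'
    (by positivity) (by positivity) (tendsto_integral_Ioi_zero tendsto_id) ?_
    (tendsto_glmga_sub_leading_term hσ ha hb)
  filter_upwards [eventually_gt_atTop 1] with y hy
  exact hasDerivAt_integral_Ioi (integrableOn_glmga_Ioi hσ ha hb one_pos) hy
    ((continuousOn_glmga hb).continuousAt (Ioi_mem_nhds (one_pos.trans hy)))
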